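/- Let x, y ∈ ℝ with x ≠ y, and suppose the boundary values Y₊(x) = lim_{ε→0+} Y(x + iε) and Y₊(y) = lim_{ε→0+} Y(y + iε) exist. Then the correlation kernel K_{n,N}(x, y) = e^{−N(V(x)+V(y))/2} ∑_{k=0}^{n−1} p_k(x) p_k(y) satisfies K_{n,N}(x, y) = e^{−N(V(x)+V(y))/2} · (1/(2πi(x − y))) · (0 1) Y₊(y)⁻¹ Y₊(x) (1 0)ᵀ, where (0 1) is a row vector and (1 0)ᵀ a column vector. -/

import Mathlib

open MeasureTheory

noncomputable section

/-- The weight `w(x) = e^{−N V(x)}`. -/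
def wt (V : ℝ → ℝ) (N : ℝ) (x : ℝ) : ℝ := Real.exp (-(N * V x))

/-- The Fokas–Its–Kitaev matrix `Y(z)` built from the orthonormal polynomials `p_k`
(with leading coefficients `κ_k`) for the weight `e^{−NV}`. -/
def FIK (V : ℝ → ℝ) (N : ℝ) (p : ℕ → Polynomial ℝ) (κ : ℕ → ℝ) (n : ℕ) (z : ℂ) :
    Matrix (Fin 2) (Fin 2) ℂ :=
  !![(κ n : ℂ)⁻¹ * Polynomial.aeval z (p n),
     (κ n : ℂ)⁻¹ * (2 * Real.pi * Complex.I)⁻¹ *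
       ∫ s : ℝ, (((p n).eval s * wt V N s : ℝ) : ℂ) / ((s : ℂ) - z);
     -(2 * Real.pi * Complex.I) * (κ (n - 1) : ℂ) * Polynomial.aeval z (p (n - 1)),
     -(κ (n - 1) : ℂ) * ∫ s : ℝ, (((p (n - 1)).eval s * wt V N s : ℝ) : ℂ) / ((s : ℂ) - z)]

/-!
Only the first column of `Y` is needed at `x`, and it is polynomial, so `Y₊(x)` has first
column `(κ_n⁻¹ p_n(x), -2πi κ_{n-1} p_{n-1}(x))`. The Christoffel–Darboux formula rewrites
`det Y(z)` as `∫ ∑_{k<n} p_k(s) p_k(z) w(s) ds`, which is `1` because the kernel reproduces the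
constant polynomial; hence `det Y₊(y) = 1` and the `(1,0)` entry of `Y₊(y)⁻¹ Y₊(x)` is the
product of first columns `2πi κ_{n-1}/κ_n (p_n(x) p_{n-1}(y) - p_{n-1}(x) p_n(y))`, which is
`2πi (x - y) ∑_{k<n} p_k(x) p_k(y)` by Christoffel–Darboux once more.
-/

open Polynomial Filter Topology Asymptotics Finset

namespace Polynomial

variable {K : Type*} [Field K]

theorem degree_sub_C_mul_lt {q r : K[X]} {m : ℕ} (hq : q.degree < ↑(m + 1))
    (hr : r.natDegree = m) (hr0 : r ≠ 0) :
    (q - C (q.coeff m / r.leadingCoeff) * r).degree < m := by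
  rw [degree_lt_iff_coeff_zero]
  intro i hi
  rcases hi.eq_or_lt with rfl | hi
  · rw [coeff_sub, coeff_C_mul, ← hr, coeff_natDegree,
      div_mul_cancel₀ _ (leadingCoeff_ne_zero.mpr hr0), sub_self]
  · have hqi : q.degree < i := hq.trans_le (by exact_mod_cast hi)
    have hri : r.natDegree < i := hr ▸ hi
    rw [coeff_sub, coeff_C_mul, coeff_eq_zero_of_degree_lt hqi, coeff_eq_zero_of_natDegree_lt hri,
      mul_zero, sub_zero]

structure IsOrthonormalSeq (L : K[X] →ₗ[K] K) (p : ℕ → K[X]) : Prop where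
  natDegree_eq : ∀ k, (p k).natDegree = k
  apply_mul : ∀ j k, L (p j * p k) = if j = k then 1 else 0

namespace IsOrthonormalSeq

variable {L : K[X] →ₗ[K] K} {p : ℕ → K[X]} (hp : IsOrthonormalSeq L p)
include hp

theorem ne_zero (k : ℕ) : p k ≠ 0 := fun h => by simpa [h] using hp.apply_mul k k

theorem degree_eq (k : ℕ) : (p k).degree = k := by
  rw [degree_eq_natDegree (hp.ne_zero k), hp.natDegree_eq]

theorem coeff_self (k : ℕ) : (p k).coeff k = (p k).leadingCoeff := by
  rw [leadingCoeff, hp.natDegree_eq]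

theorem degree_X_mul (k : ℕ) : (X * p k).degree = ↑(k + 1) := by
  rw [X_mul, degree_mul_X, hp.degree_eq]; rfl

theorem apply_sum_mul (c : ℕ → K) (m j : ℕ) :
    L ((∑ i ∈ range m, C (c i) * p i) * p j) = if j < m then c j else 0 := by
  simp only [sum_mul, map_sum, C_mul', smul_mul_assoc, map_smul, hp.apply_mul, smul_eq_mul,
    mul_ite, mul_one, mul_zero, sum_ite_eq', mem_range]

theorem exists_eq_sum_of_degree_lt {m : ℕ} {q : K[X]} (hq : q.degree < m) :
    ∃ c : ℕ → K, q = ∑ i ∈ range m, C (c i) * p i := by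
  induction m generalizing q with
  | zero => exact ⟨0, by simpa using hq⟩
  | succ m ih =>
    obtain ⟨c, hc⟩ := ih (degree_sub_C_mul_lt hq (hp.natDegree_eq m) (hp.ne_zero m))
    refine ⟨Function.update c m (q.coeff m / (p m).leadingCoeff), ?_⟩
    rw [sum_range_succ, Function.update_self, ← sub_eq_iff_eq_add, hc]
    exact sum_congr rfl fun i hi => by
      rw [Function.update_of_ne (mem_range.mp hi).ne]

theorem eq_sum_of_degree_lt {m : ℕ} {q : K[X]} (hq : q.degree < m) :
    q = ∑ i ∈ range m, C (L (q * p i)) * p i := by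
  obtain ⟨c, hc⟩ := hp.exists_eq_sum_of_degree_lt hq
  nth_rewrite 1 [hc]
  refine sum_congr rfl fun i hi => ?_
  rw [hc, hp.apply_sum_mul, if_pos (mem_range.mp hi)]

theorem apply_mul_eq_zero_of_degree_lt {j : ℕ} {q : K[X]} (hq : q.degree < j) :
    L (q * p j) = 0 := by
  obtain ⟨c, rfl⟩ := hp.exists_eq_sum_of_degree_lt hq
  rw [hp.apply_sum_mul, if_neg (lt_irrefl j)]

theorem apply_X_mul_mul_succ (k : ℕ) :
    L (X * p k * p (k + 1)) = (p k).leadingCoeff / (p (k + 1)).leadingCoeff := by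
  have hr := degree_sub_C_mul_lt (q := X * p k)
    (by rw [hp.degree_X_mul]; exact_mod_cast (k + 1).lt_succ_self)
    (hp.natDegree_eq (k + 1)) (hp.ne_zero (k + 1))
  rw [coeff_X_mul, hp.coeff_self] at hr
  rw [← sub_add_cancel (X * p k) (C _ * p (k + 1)), add_mul, map_add,
    hp.apply_mul_eq_zero_of_degree_lt hr, mul_assoc, C_mul', map_smul, hp.apply_mul, if_pos rfl,
    smul_eq_mul, mul_one, zero_add]

theorem X_mul_zero :
    X * p 0 = C ((p 0).leadingCoeff / (p 1).leadingCoeff) * p 1 + C (L (X * p 0 * p 0)) * p 0 := by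
  have h := hp.eq_sum_of_degree_lt (m := 2) (by rw [hp.degree_X_mul]; exact_mod_cast one_lt_two)
  rw [sum_range_succ, sum_range_one, hp.apply_X_mul_mul_succ] at h
  linear_combination h

theorem X_mul_succ (k : ℕ) :
    X * p (k + 1) = C ((p (k + 1)).leadingCoeff / (p (k + 2)).leadingCoeff) * p (k + 2) +
      C (L (X * p (k + 1) * p (k + 1))) * p (k + 1) +
      C ((p k).leadingCoeff / (p (k + 1)).leadingCoeff) * p k := by
  have h := hp.eq_sum_of_degree_lt (m := k + 3)
    (by rw [hp.degree_X_mul]; exact_mod_cast (k + 2).lt_succ_self)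
  have hlow : ∀ i ∈ range k, C (L (X * p (k + 1) * p i)) * p i = 0 := fun i hi => by
    have hi : (X * p i).degree < ↑(k + 1) := by
      rw [hp.degree_X_mul]; exact_mod_cast Nat.succ_lt_succ (mem_range.mp hi)
    rw [mul_right_comm, hp.apply_mul_eq_zero_of_degree_lt hi, C_0, zero_mul]
  rw [sum_range_succ, sum_range_succ, sum_range_succ, sum_eq_zero hlow, zero_add,
    mul_right_comm X (p (k + 1)) (p k), hp.apply_X_mul_mul_succ, hp.apply_X_mul_mul_succ] at h
  linear_combination h

theorem christoffel_darboux {A : Type*} [CommRing A] [Algebra K A] (m : ℕ) (x y : A) :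
    (x - y) * ∑ k ∈ range (m + 1), aeval x (p k) * aeval y (p k) =
      algebraMap K A ((p m).leadingCoeff / (p (m + 1)).leadingCoeff) *
        (aeval x (p (m + 1)) * aeval y (p m) - aeval x (p m) * aeval y (p (m + 1))) := by
  induction m with
  | zero =>
    have ex := congrArg (aeval x) hp.X_mul_zero
    have ey := congrArg (aeval y) hp.X_mul_zero
    simp only [map_add, map_mul, aeval_X, aeval_C] at ex ey
    rw [sum_range_one]
    linear_combination aeval y (p 0) * ex - aeval x (p 0) * ey
  | succ m ih =>
    have ex := congrArg (aeval x) (hp.X_mul_succ m)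
    have ey := congrArg (aeval y) (hp.X_mul_succ m)
    simp only [map_add, map_mul, aeval_X, aeval_C] at ex ey
    rw [sum_range_succ, mul_add, ih]
    linear_combination aeval y (p (m + 1)) * ex - aeval x (p (m + 1)) * ey

theorem eq_C_leadingCoeff_zero : p 0 = C (p 0).leadingCoeff :=
  (eq_C_of_natDegree_eq_zero (hp.natDegree_eq 0)).trans (by rw [hp.coeff_self])

theorem apply_eq (k : ℕ) : L (p k) = if k = 0 then (p 0).leadingCoeff⁻¹ else 0 := by
  have h := hp.apply_mul k 0
  rw [hp.eq_C_leadingCoeff_zero, mul_comm, C_mul', map_smul, smul_eq_mul] at h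
  have hc := leadingCoeff_ne_zero.mpr (hp.ne_zero 0)
  rcases eq_or_ne k 0 with rfl | hk
  · rw [if_pos rfl] at h ⊢
    exact eq_inv_of_mul_eq_one_right h
  · rw [if_neg hk] at h ⊢
    exact (mul_eq_zero.mp h).resolve_left hc

theorem sum_aeval_mul_apply {A : Type*} [CommRing A] [Algebra K A] (m : ℕ) (z : A) :
    ∑ k ∈ range (m + 1), aeval z (p k) * algebraMap K A (L (p k)) = 1 := by
  rw [sum_eq_single 0 (fun k _ hk => by rw [hp.apply_eq, if_neg hk, map_zero, mul_zero])
    (by simp), hp.apply_eq, if_pos rfl]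
  nth_rewrite 1 [hp.eq_C_leadingCoeff_zero]
  rw [aeval_C, ← map_mul,
    mul_inv_cancel₀ (leadingCoeff_ne_zero.mpr (hp.ne_zero 0)), map_one]

end IsOrthonormalSeq
end Polynomial

theorem Polynomial.aeval_complex_ofReal (q : ℝ[X]) (s : ℝ) :
    aeval (s : ℂ) q = ((q.eval s : ℝ) : ℂ) :=
  (ofReal_eval q s).symm

section Weight

variable {V : ℝ → ℝ} {N : ℝ} (hV : Continuous V)
  (hgrowth : Tendsto (fun x : ℝ => V x / Real.log (x ^ 2 + 1)) (cocompact ℝ) atTop) (hN : 0 < N)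

include hV in
theorem continuous_wt : Continuous (wt V N) := by
  unfold wt; fun_prop

include hgrowth hN in
theorem eventually_wt_mul_pow_le_one (m : ℕ) :
    ∀ᶠ s in cocompact ℝ, wt V N s * (s ^ 2 + 1) ^ m ≤ 1 := by
  filter_upwards [hgrowth.eventually_ge_atTop (m / N),
    (isCompact_singleton (x := (0 : ℝ))).compl_mem_cocompact] with s hVs hs
  have hlog : 0 < Real.log (s ^ 2 + 1) := Real.log_pos (by
    have : 0 < s ^ 2 := pow_pos (abs_pos.mpr hs) 2 |>.trans_eq (sq_abs s)
    linarith)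
  rw [div_le_div_iff₀ hN hlog] at hVs
  rw [wt, ← Real.exp_log (by positivity : (0 : ℝ) < (s ^ 2 + 1) ^ m), Real.log_pow,
    ← Real.exp_add, Real.exp_le_one_iff]
  linarith

include hV hgrowth hN in
theorem integrable_pow_mul_wt (k : ℕ) : Integrable fun s : ℝ => s ^ k * wt V N s := by
  refine ((continuous_pow k).mul (continuous_wt hV)).locallyIntegrable
    |>.integrable_of_isBigO_cocompact (f := fun s : ℝ => s ^ k * wt V N s)
      (g := fun s : ℝ => (1 + s ^ 2)⁻¹) ?_ (integrable_inv_one_add_sq.integrableAtFilter _)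
  refine IsBigO.of_bound 1 ?_
  filter_upwards [eventually_wt_mul_pow_le_one hgrowth hN (k + 1)] with s hs
  have hw : 0 < wt V N s := Real.exp_pos _
  have habs : |s| ≤ s ^ 2 + 1 := by nlinarith [sq_abs s, abs_nonneg s]
  have hpos : (0 : ℝ) < s ^ 2 + 1 := by positivity
  rw [one_mul, norm_mul, norm_pow, Real.norm_of_nonneg hw.le, norm_inv, add_comm,
    Real.norm_of_nonneg hpos.le, ← one_div, le_div_iff₀ hpos, Real.norm_eq_abs]
  calc |s| ^ k * wt V N s * (s ^ 2 + 1) ≤ (s ^ 2 + 1) ^ k * wt V N s * (s ^ 2 + 1) := by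
        gcongr
    _ = wt V N s * (s ^ 2 + 1) ^ (k + 1) := by ring
    _ ≤ 1 := hs

include hV hgrowth hN in
theorem integrable_eval_mul_wt (q : ℝ[X]) : Integrable fun s => q.eval s * wt V N s := by
  simp_rw [eval_eq_sum_range, Finset.sum_mul, mul_assoc]
  exact integrable_finsetSum _ fun i _ => (integrable_pow_mul_wt hV hgrowth hN i).const_mul _

end Weight

def weightedMoment (w : ℝ → ℝ) (hw : ∀ q : ℝ[X], Integrable fun s => q.eval s * w s) :
    ℝ[X] →ₗ[ℝ] ℝ where
  toFun q := ∫ s, q.eval s * w s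
  map_add' q r := by simp only [eval_add, add_mul, integral_add (hw q) (hw r)]
  map_smul' c q := by
    simp only [eval_smul, smul_eq_mul, mul_assoc, integral_const_mul, RingHom.id_apply]

theorem Complex.ofReal_sub_ne_zero_of_im_ne_zero {z : ℂ} (hz : z.im ≠ 0) (s : ℝ) :
    (s : ℂ) - z ≠ 0 :=
  fun h => hz (by simpa using congrArg Complex.im h)

theorem integrable_div_ofReal_sub {f : ℝ → ℝ} (hf : Integrable f) {z : ℂ}
    (hz : z.im ≠ 0) :
    Integrable fun s : ℝ => (f s : ℂ) / ((s : ℂ) - z) := by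
  simp_rw [div_eq_mul_inv]
  refine hf.ofReal.mul_bdd (c := |z.im|⁻¹)
    (by fun_prop (disch := exact Complex.ofReal_sub_ne_zero_of_im_ne_zero hz))
    (ae_of_all _ fun s => ?_)
  rw [norm_inv]
  refine inv_anti₀ (abs_pos.mpr hz) ?_
  simpa using Complex.abs_im_le_norm ((s : ℂ) - z)

theorem isOrthonormalSeq_weightedMoment {w : ℝ → ℝ}
    (hw : ∀ q : ℝ[X], Integrable fun s => q.eval s * w s) {p : ℕ → ℝ[X]}
    (hdeg : ∀ k, (p k).natDegree = k)
    (horth : ∀ j k, (∫ x : ℝ, (p j).eval x * (p k).eval x * w x) = if j = k then 1 else 0) :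
    IsOrthonormalSeq (weightedMoment w hw) p :=
  ⟨hdeg, fun j k => by simpa [weightedMoment] using horth j k⟩

theorem tendsto_ofReal_add_mul_I (x : ℝ) :
    Tendsto (fun ε : ℝ => (x : ℂ) + ε * Complex.I) (𝓝[>] 0) (𝓝 x) :=
  ((by fun_prop : Continuous fun ε : ℝ => (x : ℂ) + ε * Complex.I).tendsto' 0 x
    (by simp)).mono_left nhdsWithin_le_nhds

theorem apply_eq_of_tendsto_add_mul_I {ι ι' : Type*} {F : ℂ → Matrix ι ι' ℂ}
    {Y : Matrix ι ι' ℂ} {x : ℝ}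
    (hY : Tendsto (fun ε : ℝ => F (x + ε * Complex.I)) (𝓝[>] 0) (𝓝 Y)) {i : ι} {j : ι'}
    (hF : Continuous fun z => F z i j) : Y i j = F x i j :=
  tendsto_nhds_unique ((((continuous_apply j).comp (continuous_apply i)).tendsto Y).comp hY)
    ((hF.tendsto x).comp (tendsto_ofReal_add_mul_I x))

theorem det_eq_one_of_tendsto_add_mul_I {ι : Type*} [Fintype ι] [DecidableEq ι]
    {F : ℂ → Matrix ι ι ℂ} {Y : Matrix ι ι ℂ} {x : ℝ}
    (hY : Tendsto (fun ε : ℝ => F (x + ε * Complex.I)) (𝓝[>] 0) (𝓝 Y))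
    (hdet : ∀ z : ℂ, z.im ≠ 0 → (F z).det = 1) : Y.det = 1 := by
  refine tendsto_nhds_unique ((continuous_id.matrix_det.tendsto Y).comp hY)
    (tendsto_const_nhds.congr' ?_)
  filter_upwards [self_mem_nhdsWithin] with ε hε
  exact (hdet _ (by simpa using hε.ne')).symm

theorem Matrix.inv_mul_apply_one_zero_of_det_eq_one {R : Type*} [CommRing R]
    {A B : Matrix (Fin 2) (Fin 2) R} (h : A.det = 1) :
    (A⁻¹ * B) 1 0 = A 0 0 * B 1 0 - A 1 0 * B 0 0 := by
  rw [Matrix.inv_def, h, Ring.inverse_one, one_smul, Matrix.adjugate_fin_two]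
  simp [Matrix.mul_apply, Fin.sum_univ_two]
  ring

theorem FIK_apply_zero_zero (V : ℝ → ℝ) (N : ℝ) (p : ℕ → ℝ[X]) (κ : ℕ → ℝ) (n : ℕ)
    (z : ℂ) :
    FIK V N p κ n z 0 0 = (κ n : ℂ)⁻¹ * aeval z (p n) := by
  simp [FIK]

theorem FIK_apply_one_zero (V : ℝ → ℝ) (N : ℝ) (p : ℕ → ℝ[X]) (κ : ℕ → ℝ) (n : ℕ)
    (z : ℂ) :
    FIK V N p κ n z 1 0 = -(2 * Real.pi * Complex.I) * (κ (n - 1) : ℂ) * aeval z (p (n - 1)) := by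
  simp [FIK]

theorem det_FIK {V : ℝ → ℝ} {N : ℝ} (hV : Continuous V)
    (hgrowth : Tendsto (fun x : ℝ => V x / Real.log (x ^ 2 + 1)) (cocompact ℝ) atTop)
    (hN : 0 < N) {p : ℕ → ℝ[X]} {κ : ℕ → ℝ}
    (hp : IsOrthonormalSeq (weightedMoment (wt V N) (integrable_eval_mul_wt hV hgrowth hN)) p)
    (hlead : ∀ k, (p k).leadingCoeff = κ k) (m : ℕ) {z : ℂ} (hz : z.im ≠ 0) :
    (FIK V N p κ (m + 1) z).det = 1 := by
  set f : ℕ → ℝ → ℂ := fun k s => (((p k).eval s * wt V N s : ℝ) : ℂ) / ((s : ℂ) - z) with hf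
  have hI : ∀ k, Integrable (f k) := fun k =>
    integrable_div_ofReal_sub (integrable_eval_mul_wt hV hgrowth hN (p k)) hz
  have hkernel : ∀ s : ℝ,
      (κ m / κ (m + 1) : ℂ) * (aeval z (p m) * f (m + 1) s - aeval z (p (m + 1)) * f m s) =
      ∑ k ∈ range (m + 1), (((p k).eval s * wt V N s : ℝ) : ℂ) * aeval z (p k) := by
    intro s
    have hCD := hp.christoffel_darboux m (s : ℂ) z
    simp only [aeval_complex_ofReal, hlead, Complex.coe_algebraMap] at hCD
    have hsum : ∑ k ∈ range (m + 1), (((p k).eval s * wt V N s : ℝ) : ℂ) * aeval z (p k) =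
        (wt V N s : ℂ) * ∑ k ∈ range (m + 1), (((p k).eval s : ℝ) : ℂ) * aeval z (p k) := by
      rw [Finset.mul_sum]
      exact sum_congr rfl fun k _ => by push_cast; ring
    rw [hsum, hf]
    push_cast at hCD ⊢
    field_simp [Complex.ofReal_sub_ne_zero_of_im_ne_zero hz s]
    linear_combination -(wt V N s : ℂ) * hCD
  calc (FIK V N p κ (m + 1) z).det
      = (κ m / κ (m + 1) : ℂ) *
          ∫ s, (aeval z (p m) * f (m + 1) s - aeval z (p (m + 1)) * f m s) := by
        rw [integral_sub ((hI _).const_mul _) ((hI _).const_mul _), integral_const_mul,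
          integral_const_mul, FIK, Nat.add_sub_cancel, Matrix.det_fin_two_of]
        field_simp
        ring
    _ = ∫ s, ∑ k ∈ range (m + 1), (((p k).eval s * wt V N s : ℝ) : ℂ) * aeval z (p k) := by
        rw [← integral_const_mul]
        exact integral_congr_ae (ae_of_all _ hkernel)
    _ = ∑ k ∈ range (m + 1), aeval z (p k) * algebraMap ℝ ℂ
          (weightedMoment (wt V N) (integrable_eval_mul_wt hV hgrowth hN) (p k)) := by
        rw [integral_finsetSum _ fun k _ =>
          (integrable_eval_mul_wt hV hgrowth hN (p k)).ofReal.mul_const _]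
        refine sum_congr rfl fun k _ => ?_
        rw [integral_mul_const, integral_complex_ofReal, mul_comm]
        rfl
    _ = 1 := hp.sum_aeval_mul_apply m z

theorem kernel_via_FIK_general
    (V : ℝ → ℝ) (hV : Continuous V)
    (hgrowth : Filter.Tendsto (fun x : ℝ => V x / Real.log (x ^ 2 + 1))
      (Filter.cocompact ℝ) Filter.atTop)
    (N : ℝ) (hN : 0 < N)
    (p : ℕ → Polynomial ℝ) (κ : ℕ → ℝ)
    (hdeg : ∀ k, (p k).natDegree = k)
    (hlead : ∀ k, (p k).leadingCoeff = κ k)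
    (horth : ∀ j k, (∫ x : ℝ, (p j).eval x * (p k).eval x * wt V N x)
      = if j = k then 1 else 0)
    (n : ℕ) (hn : 1 ≤ n)
    (x y : ℝ) (hxy : x ≠ y)
    (Yx Yy : Matrix (Fin 2) (Fin 2) ℂ)
    (hYx : Filter.Tendsto (fun ε : ℝ => FIK V N p κ n ((x : ℂ) + ε * Complex.I))
      (nhdsWithin 0 (Set.Ioi 0)) (nhds Yx))
    (hYy : Filter.Tendsto (fun ε : ℝ => FIK V N p κ n ((y : ℂ) + ε * Complex.I))
      (nhdsWithin 0 (Set.Ioi 0)) (nhds Yy)) :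
    ((Real.exp (-(N * (V x + V y)) / 2) *
        ∑ k ∈ Finset.range n, (p k).eval x * (p k).eval y : ℝ) : ℂ)
      = (Real.exp (-(N * (V x + V y)) / 2) : ℝ) *
          (1 / (2 * Real.pi * Complex.I * ((x : ℂ) - (y : ℂ)))) * ((Yy⁻¹ * Yx) 1 0) := by
  obtain ⟨m, rfl⟩ : ∃ m, n = m + 1 := ⟨n - 1, by omega⟩
  have hp := isOrthonormalSeq_weightedMoment (integrable_eval_mul_wt hV hgrowth hN) hdeg horth
  have hcont₀ : Continuous fun z => FIK V N p κ (m + 1) z 0 0 := by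
    simp only [FIK_apply_zero_zero]; fun_prop
  have hcont₁ : Continuous fun z => FIK V N p κ (m + 1) z 1 0 := by
    simp only [FIK_apply_one_zero]; fun_prop
  have hCD := hp.christoffel_darboux m (x : ℂ) (y : ℂ)
  simp only [aeval_complex_ofReal, hlead, Complex.coe_algebraMap] at hCD
  rw [Matrix.inv_mul_apply_one_zero_of_det_eq_one
      (det_eq_one_of_tendsto_add_mul_I hYy fun z hz => det_FIK hV hgrowth hN hp hlead m hz),
    apply_eq_of_tendsto_add_mul_I hYx hcont₀, apply_eq_of_tendsto_add_mul_I hYx hcont₁,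
    apply_eq_of_tendsto_add_mul_I hYy hcont₀, apply_eq_of_tendsto_add_mul_I hYy hcont₁]
  simp only [FIK_apply_zero_zero, FIK_apply_one_zero, Nat.add_sub_cancel, aeval_complex_ofReal]
  have hxy' : (x : ℂ) - y ≠ 0 := sub_ne_zero.mpr (Complex.ofReal_injective.ne hxy)
  push_cast at hCD ⊢
  field_simp at hCD ⊢
  linear_combination hCD

/-- If the boundary values `Y₊(x)`, `Y₊(y)` of the Fokas–Its–Kitaev matrix
exist at real points `x ≠ y`, then the correlation kernel
`K_{n,N}(x,y) = e^{−N(V(x)+V(y))/2} ∑_{k<n} p_k(x) p_k(y)` equals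
`e^{−N(V(x)+V(y))/2} (2πi(x−y))⁻¹ (0 1) Y₊(y)⁻¹ Y₊(x) (1 0)ᵀ`. -/
theorem kernel_via_FIK
    (V : ℝ → ℝ) (hV : Continuous V)
    (hgrowth : Filter.Tendsto (fun x : ℝ => V x / Real.log (x ^ 2 + 1))
      (Filter.cocompact ℝ) Filter.atTop)
    (N : ℝ) (hN : 0 < N)
    (p : ℕ → Polynomial ℝ) (κ : ℕ → ℝ)
    (hdeg : ∀ k, (p k).natDegree = k)
    (hκpos : ∀ k, 0 < κ k)
    (hlead : ∀ k, (p k).leadingCoeff = κ k)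
    (horth : ∀ j k, (∫ x : ℝ, (p j).eval x * (p k).eval x * wt V N x)
      = if j = k then 1 else 0)
    (n : ℕ) (hn : 1 ≤ n)
    (x y : ℝ) (hxy : x ≠ y)
    (Yx Yy : Matrix (Fin 2) (Fin 2) ℂ)
    (hYx : Filter.Tendsto (fun ε : ℝ => FIK V N p κ n ((x : ℂ) + ε * Complex.I))
      (nhdsWithin 0 (Set.Ioi 0)) (nhds Yx))
    (hYy : Filter.Tendsto (fun ε : ℝ => FIK V N p κ n ((y : ℂ) + ε * Complex.I))
      (nhdsWithin 0 (Set.Ioi 0)) (nhds Yy)) :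
    ((Real.exp (-(N * (V x + V y)) / 2) *
        ∑ k ∈ Finset.range n, (p k).eval x * (p k).eval y : ℝ) : ℂ)
      = (Real.exp (-(N * (V x + V y)) / 2) : ℝ) *
          (1 / (2 * Real.pi * Complex.I * ((x : ℂ) - (y : ℂ)))) * ((Yy⁻¹ * Yx) 1 0) :=
  kernel_via_FIK_general V hV hgrowth N hN p κ hdeg hlead horth n hn x y hxy Yx Yy hYx hYy

end
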